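/- arXiv:1311.1959 — 2 statements merged into one kernel-verified Lean document; each statement's English description precedes it below -/
import Mathlib

section
/- (Theorem 1(i)) Suppose X_1, …, X_n affinely span ℝ^d. Then the sample mean θ̃ lies in Θ_n, the composite similarity mapping h satisfies h(θ̃) = θ̃, and θ̃ is the unique fixed point of h: for every θ ∈ Θ_n with θ ≠ θ̃ one has h(θ) ≠ θ. -/
/-!
By AM–GM, `∏ n wᵢ ≤ 1` on the simplex, with equality only for the uniform weights, whose
barycenter is `θ̃`. As `W(θ)` is compact the supremum `R(θ)` is attained, so `R(θ) < 1` for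
`θ ≠ θ̃`. A point of `Θₙ` lies on an open segment from `θ̃` to a point of the hull, so it carries
strictly positive weights and `R(θ) > 0`; hence `l(θ) > 0`, and `h(θ) - θ = (l(θ)/2n)(θ - θ̃)`
vanishes only at `θ̃`. Conversely a point with strictly positive weights, such as `θ̃`, lies on an
open segment from a point of the hull to a given interior point, hence is interior.
-/

noncomputable section

/-- The set of empirical likelihood weight vectors for `θ`:
`W(θ) = {w : wᵢ ≥ 0, Σ wᵢ = 1, Σ wᵢ Xᵢ = θ}`. -/
def Wset (n d : ℕ) (X : Fin n → EuclideanSpace ℝ (Fin d))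
    (θ : EuclideanSpace ℝ (Fin d)) : Set (Fin n → ℝ) :=
  {w | (∀ i, 0 ≤ w i) ∧ ∑ i, w i = 1 ∧ ∑ i, w i • X i = θ}

/-- The empirical likelihood ratio `R(θ) = sup {∏ n·wᵢ : w ∈ W(θ)}` (the sup over
the empty set is `0`, since `Real.sSup ∅ = 0`). -/
def elR (n d : ℕ) (X : Fin n → EuclideanSpace ℝ (Fin d))
    (θ : EuclideanSpace ℝ (Fin d)) : ℝ :=
  sSup ((fun w => ∏ i, (n : ℝ) * w i) '' Wset n d X θ)

/-- The empirical log-likelihood ratio `l(θ) = -2 log R(θ)`. -/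
def elln (n d : ℕ) (X : Fin n → EuclideanSpace ℝ (Fin d))
    (θ : EuclideanSpace ℝ (Fin d)) : ℝ :=
  -2 * Real.log (elR n d X θ)

/-- The sample mean `θ̃ = n⁻¹ Σ Xᵢ`. -/
def sampleMean (n d : ℕ) (X : Fin n → EuclideanSpace ℝ (Fin d)) :
    EuclideanSpace ℝ (Fin d) :=
  (n : ℝ)⁻¹ • ∑ i, X i

/-- The composite similarity mapping `h(θ) = θ̃ + (1 + l(θ)/(2n))(θ - θ̃)`. -/
def csm (n d : ℕ) (X : Fin n → EuclideanSpace ℝ (Fin d))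
    (θ : EuclideanSpace ℝ (Fin d)) : EuclideanSpace ℝ (Fin d) :=
  sampleMean n d X + (1 + elln n d X θ / (2 * n)) • (θ - sampleMean n d X)


open Finset Topology

theorem prod_card_mul_lt_one {ι : Type*} [Fintype ι] {w : ι → ℝ} (hw : w ∈ stdSimplex ℝ ι)
    (hne : w ≠ fun _ => (Fintype.card ι : ℝ)⁻¹) :
    ∏ i, (Fintype.card ι : ℝ) * w i < 1 := by
  set c := Fintype.card ι
  have hc : c ≠ 0 := fun hc => by
    have := Fintype.card_eq_zero_iff.mp hc
    simpa using hw.2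
  have hcR : (c : ℝ) ≠ 0 := Nat.cast_ne_zero.mpr hc
  have hz : ∀ i ∈ univ, 0 ≤ (c : ℝ) * w i := fun i _ => mul_nonneg c.cast_nonneg (hw.1 i)
  have hweights : ∑ _i : ι, (c : ℝ)⁻¹ = 1 := by simp [c, hc]
  have hmean : ∑ i, (c : ℝ)⁻¹ * ((c : ℝ) * w i) = 1 := by
    simp [← mul_assoc, inv_mul_cancel₀ hcR, hw.2]
  set G := ∏ i, ((c : ℝ) * w i) ^ (c : ℝ)⁻¹ with hG_def
  have hprod : ∏ i, (c : ℝ) * w i = G ^ c := by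
    rw [hG_def, Real.finsetProd_rpow _ _ hz, Real.rpow_inv_natCast_pow (prod_nonneg hz) hc]
  have hG : G < 1 := by
    refine (Real.geom_mean_le_arith_mean_weighted _ _ _ (fun _ _ => by positivity) hweights hz
      |>.trans_eq hmean).lt_of_ne fun hG => hne (funext fun j => eq_inv_of_mul_eq_one_right ?_)
    rw [← hmean]
    exact (Real.geom_mean_eq_arith_mean_weighted_iff_of_pos' _ _ _ (fun _ _ => by positivity)
      hweights hz).1 (hG.trans hmean.symm) j (mem_univ j)
  rw [hprod]
  exact pow_lt_one₀ (prod_nonneg fun i hi => Real.rpow_nonneg (hz i hi) _) hG hc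

theorem exists_mem_openSegment_of_mem_interior {E : Type*} [AddCommGroup E] [Module ℝ E]
    [TopologicalSpace E] [IsTopologicalAddGroup E] [ContinuousSMul ℝ E] {s : Set E} {x : E}
    (hx : x ∈ interior s) (c : E) : ∃ y ∈ s, x ∈ openSegment ℝ c y := by
  have hline : ∀ᶠ t in 𝓝 (0 : ℝ), x + t • (x - c) ∈ s :=
    ((by fun_prop : Continuous fun t : ℝ => x + t • (x - c)).tendsto' 0 x (by simp)).eventually
      (mem_interior_iff_mem_nhds.mp hx)
  obtain ⟨t, ht, hts⟩ := hline.exists_gt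
  refine ⟨_, hts, t / (1 + t), 1 / (1 + t), by positivity, by positivity, by field_simp; ring, ?_⟩
  match_scalars
  · ring
  · field_simp

section Wset

variable {n d : ℕ} {X : Fin n → EuclideanSpace ℝ (Fin d)}

theorem Wset_eq_stdSimplex_inter (θ : EuclideanSpace ℝ (Fin d)) :
    Wset n d X θ = stdSimplex ℝ (Fin n) ∩ {w | ∑ i, w i • X i = θ} := by
  ext w
  simp [Wset, stdSimplex, and_assoc]

theorem isCompact_Wset (θ : EuclideanSpace ℝ (Fin d)) : IsCompact (Wset n d X θ) := by
  rw [Wset_eq_stdSimplex_inter]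
  exact (isCompact_stdSimplex ℝ (Fin n)).inter_right (isClosed_eq (by fun_prop) continuous_const)

theorem smul_add_smul_mem_Wset {a b : EuclideanSpace ℝ (Fin d)} {v u : Fin n → ℝ}
    (hv : v ∈ Wset n d X a) (hu : u ∈ Wset n d X b) {s t : ℝ} (hs : 0 ≤ s) (ht : 0 ≤ t)
    (hst : s + t = 1) : s • v + t • u ∈ Wset n d X (s • a + t • b) := by
  obtain ⟨hv0, hv1, hva⟩ := hv
  obtain ⟨hu0, hu1, hub⟩ := hu
  refine ⟨fun i => ?_, ?_, ?_⟩
  · have := hv0 i; have := hu0 i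
    simp only [Pi.add_apply, Pi.smul_apply, smul_eq_mul]
    positivity
  · simp [sum_add_distrib, ← mul_sum, hv1, hu1, hst]
  · simp [add_smul, mul_smul, sum_add_distrib, ← smul_sum, hva, hub]

theorem uniform_mem_Wset (hn : 0 < n) :
    (fun _ => (n : ℝ)⁻¹) ∈ Wset n d X (sampleMean n d X) :=
  ⟨fun _ => by positivity, by simp [hn.ne'], by rw [sampleMean, smul_sum]⟩

theorem Wset_nonempty_of_mem_convexHull {θ : EuclideanSpace ℝ (Fin d)}
    (hθ : θ ∈ convexHull ℝ (Set.range X)) : (Wset n d X θ).Nonempty := by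
  classical
  refine convexHull_min (t := {θ | (Wset n d X θ).Nonempty}) ?_ ?_ hθ
  · rintro _ ⟨i, rfl⟩
    exact ⟨Pi.single i 1, fun j => by by_cases h : j = i <;> simp [h], by simp,
      by simp [Pi.single_apply]⟩
  · rintro a ⟨v, hv⟩ b ⟨u, hu⟩ s t hs ht hst
    exact ⟨_, smul_add_smul_mem_Wset hv hu hs ht hst⟩

theorem mem_interior_convexHull_iff_exists_pos_mem_Wset (hn : 0 < n)
    (hspan : (interior (convexHull ℝ (Set.range X))).Nonempty) {θ : EuclideanSpace ℝ (Fin d)} :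
    θ ∈ interior (convexHull ℝ (Set.range X)) ↔ ∃ w ∈ Wset n d X θ, ∀ i, 0 < w i := by
  constructor
  · intro hθ
    obtain ⟨y, hy, a, b, ha, hb, hab, rfl⟩ :=
      exists_mem_openSegment_of_mem_interior hθ (sampleMean n d X)
    obtain ⟨v, hv⟩ := Wset_nonempty_of_mem_convexHull hy
    refine ⟨_, smul_add_smul_mem_Wset (uniform_mem_Wset hn) hv ha.le hb.le hab, fun i => ?_⟩
    have := hv.1 i
    simp only [Pi.add_apply, Pi.smul_apply, smul_eq_mul]
    positivity
  · rintro ⟨w, ⟨-, hw1, hwθ⟩, hwpos⟩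
    obtain ⟨y, hy⟩ := hspan
    obtain ⟨v, hv0, hv1, hvy⟩ := Wset_nonempty_of_mem_convexHull (interior_subset hy)
    have : Nonempty (Fin n) := ⟨⟨0, hn⟩⟩
    obtain ⟨i₀, hi₀⟩ := Finite.exists_min w
    set ε := w i₀
    have hε : 0 < ε := hwpos i₀
    have hz : (1 + ε) • θ - ε • y ∈ convexHull ℝ (Set.range X) := by
      refine mem_convexHull_of_exists_fintype ((1 + ε) • w - ε • v) X (fun i => ?_) ?_
        Set.mem_range_self ?_
      · have : v i ≤ 1 := hv1 ▸ single_le_sum (fun j _ => hv0 j) (mem_univ i)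
        simp only [Pi.sub_apply, Pi.smul_apply, smul_eq_mul]
        nlinarith [hi₀ i, hv0 i]
      · simp [sum_sub_distrib, ← mul_sum, hw1, hv1]
      · simp [sub_smul, mul_smul, sum_sub_distrib, ← smul_sum, hwθ, hvy]
    have hθ : θ = (1 + ε)⁻¹ • ((1 + ε) • θ - ε • y) + (ε / (1 + ε)) • y := by
      match_scalars
      · field_simp
      · ring
    rw [hθ]
    exact (convex_convexHull ℝ _).combo_self_interior_mem_interior hz hy (by positivity)
      (by positivity) (by field_simp)

end Wset

section EmpiricalLikelihood

variable {n d : ℕ} {X : Fin n → EuclideanSpace ℝ (Fin d)} {θ : EuclideanSpace ℝ (Fin d)}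

theorem isCompact_image_prod_Wset (θ : EuclideanSpace ℝ (Fin d)) :
    IsCompact ((fun w => ∏ i, (n : ℝ) * w i) '' Wset n d X θ) :=
  (isCompact_Wset θ).image (by fun_prop)

theorem elR_pos_of_mem_interior (hn : 0 < n)
    (hspan : (interior (convexHull ℝ (Set.range X))).Nonempty)
    (hθ : θ ∈ interior (convexHull ℝ (Set.range X))) : 0 < elR n d X θ := by
  obtain ⟨w, hw, hwpos⟩ := (mem_interior_convexHull_iff_exists_pos_mem_Wset hn hspan).1 hθ
  exact (prod_pos fun i _ => mul_pos (Nat.cast_pos.mpr hn) (hwpos i)).trans_le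
    (le_csSup (isCompact_image_prod_Wset θ).bddAbove ⟨w, hw, rfl⟩)

theorem elR_lt_one_of_ne_sampleMean (hθ : θ ≠ sampleMean n d X) : elR n d X θ < 1 := by
  rcases (Wset n d X θ).eq_empty_or_nonempty with hempty | hne
  · simp [elR, hempty]
  obtain ⟨w, hw, hwR⟩ := (isCompact_image_prod_Wset θ).sSup_mem (hne.image _)
  have hw_ne : w ≠ fun _ => (Fintype.card (Fin n) : ℝ)⁻¹ := by
    rintro rfl
    apply hθ
    rw [← hw.2.2, sampleMean, smul_sum, Fintype.card_fin]
  rw [elR, ← hwR]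
  simpa using prod_card_mul_lt_one ⟨hw.1, hw.2.1⟩ hw_ne

theorem elln_pos (hn : 0 < n) (hspan : (interior (convexHull ℝ (Set.range X))).Nonempty)
    (hθ : θ ∈ interior (convexHull ℝ (Set.range X))) (hne : θ ≠ sampleMean n d X) :
    0 < elln n d X θ := by
  have := Real.log_neg (elR_pos_of_mem_interior hn hspan hθ) (elR_lt_one_of_ne_sampleMean hne)
  rw [elln]
  linarith

theorem csm_eq_self_iff (hn : 0 < n) :
    csm n d X θ = θ ↔ elln n d X θ = 0 ∨ θ = sampleMean n d X := by
  have hcsm : csm n d X θ = θ + (elln n d X θ / (2 * n)) • (θ - sampleMean n d X) := by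
    rw [csm]
    module
  rw [hcsm, add_eq_left, smul_eq_zero, div_eq_zero_iff, sub_eq_zero]
  simp [hn.ne']

end EmpiricalLikelihood

theorem stmt6_general (n d : ℕ) (hn : 0 < n)
    (X : Fin n → EuclideanSpace ℝ (Fin d))
    (hspan : (interior (convexHull ℝ (Set.range X))).Nonempty) :
    sampleMean n d X ∈ interior (convexHull ℝ (Set.range X)) ∧
      csm n d X (sampleMean n d X) = sampleMean n d X ∧
      (∀ θ ∈ interior (convexHull ℝ (Set.range X)),
        θ ≠ sampleMean n d X → csm n d X θ ≠ θ) := by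
  refine ⟨?_, by simp [csm], fun θ hθ hne hfix => ?_⟩
  · exact (mem_interior_convexHull_iff_exists_pos_mem_Wset hn hspan).2
      ⟨_, uniform_mem_Wset hn, fun _ => by positivity⟩
  · rcases (csm_eq_self_iff hn).1 hfix with hzero | hmean
    · exact (elln_pos hn hspan hθ hne).ne' hzero
    · exact hne hmean

/-- Theorem 1(i): The sample mean `θ̃` lies in `Θₙ`, is a fixed point
of the composite similarity mapping `h`, and is its unique fixed point on `Θₙ`. -/
theorem stmt6 (n d : ℕ) (hn : 0 < n) (hd : 0 < d)
    (X : Fin n → EuclideanSpace ℝ (Fin d))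
    (hspan : (interior (convexHull ℝ (Set.range X))).Nonempty) :
    sampleMean n d X ∈ interior (convexHull ℝ (Set.range X)) ∧
      csm n d X (sampleMean n d X) = sampleMean n d X ∧
      (∀ θ ∈ interior (convexHull ℝ (Set.range X)),
        θ ≠ sampleMean n d X → csm n d X θ ≠ θ) :=
  stmt6_general n d hn X hspan
end
end

section
/- (Continuity of the empirical likelihood ratio on its domain) Suppose X_1, …, X_n affinely span ℝ^d. Then the empirical likelihood ratio R is continuous on Θ_n, and hence the empirical log-likelihood ratio l(θ) = −2·log R(θ) is continuous on Θ_n. -/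
noncomputable section

/-- The product map `w ↦ ∏ n wᵢ` is continuous. -/
lemma prodCont (n : ℕ) : Continuous (fun w : Fin n → ℝ => ∏ i, (n : ℝ) * w i) :=
  continuous_finset_prod _ fun i _ => continuous_const.mul (continuous_apply i)

/-- `W(θ)` is compact. -/
lemma Wset_compact (n d : ℕ) (X : Fin n → EuclideanSpace ℝ (Fin d))
    (θ : EuclideanSpace ℝ (Fin d)) : IsCompact (Wset n d X θ) := by
  have hsub : Wset n d X θ ⊆ Set.pi Set.univ (fun _ : Fin n => Set.Icc (0:ℝ) 1) := by
    rintro w ⟨h0, h1, -⟩ i -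
    refine ⟨h0 i, ?_⟩
    calc w i ≤ ∑ j, w j := Finset.single_le_sum (fun j _ => h0 j) (Finset.mem_univ i)
      _ = 1 := h1
  refine IsCompact.of_isClosed_subset (isCompact_univ_pi fun _ => isCompact_Icc) ?_ hsub
  have : Wset n d X θ =
      (⋂ i, {w : Fin n → ℝ | 0 ≤ w i}) ∩
        ({w : Fin n → ℝ | ∑ i, w i = 1} ∩ {w : Fin n → ℝ | ∑ i, w i • X i = θ}) := by
    ext w; simp only [Wset, Set.mem_setOf_eq, Set.mem_inter_iff, Set.mem_iInter]
  rw [this]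
  refine IsClosed.inter (isClosed_iInter fun i => isClosed_le continuous_const (continuous_apply i))
    (IsClosed.inter (isClosed_eq (continuous_finset_sum _ fun i _ => continuous_apply i)
      continuous_const)
      (isClosed_eq (continuous_finset_sum _ fun i _ => (continuous_apply i).smul continuous_const)
        continuous_const))

/-- The supremum defining `R(θ)` is attained when `W(θ)` is nonempty. -/
lemma exists_elR_eq (n d : ℕ) (X : Fin n → EuclideanSpace ℝ (Fin d))
    {θ : EuclideanSpace ℝ (Fin d)} (hne : (Wset n d X θ).Nonempty) :
    ∃ w ∈ Wset n d X θ, elR n d X θ = ∏ i, (n : ℝ) * w i ∧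
      ∀ v ∈ Wset n d X θ, ∏ i, (n : ℝ) * v i ≤ ∏ i, (n : ℝ) * w i := by
  obtain ⟨w, hw, hmax⟩ := (Wset_compact n d X θ).exists_isMaxOn hne (prodCont n).continuousOn
  refine ⟨w, hw, ?_, fun v hv => hmax hv⟩
  refine (IsGreatest.csSup_eq ⟨Set.mem_image_of_mem _ hw, ?_⟩)
  rintro y ⟨v, hv, rfl⟩
  exact hmax hv

/-- Every weight vector gives a lower bound for `R(θ)`. -/
lemma le_elR (n d : ℕ) (X : Fin n → EuclideanSpace ℝ (Fin d))
    {θ : EuclideanSpace ℝ (Fin d)} {w : Fin n → ℝ} (hw : w ∈ Wset n d X θ) :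
    ∏ i, (n : ℝ) * w i ≤ elR n d X θ :=
  le_csSup ((Wset_compact n d X θ).image (prodCont n)).bddAbove (Set.mem_image_of_mem _ hw)

/-- Interior points of the convex hull admit strictly positive weight vectors. -/
lemma exists_posWeights (n d : ℕ) (hn : 0 < n) (X : Fin n → EuclideanSpace ℝ (Fin d))
    {θ : EuclideanSpace ℝ (Fin d)} (hθ : θ ∈ interior (convexHull ℝ (Set.range X))) :
    ∃ w ∈ Wset n d X θ, ∀ i, 0 < w i := by
  obtain ⟨ε, hε, hball⟩ := Metric.isOpen_iff.1 isOpen_interior θ hθ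
  set m : EuclideanSpace ℝ (Fin d) := (n : ℝ)⁻¹ • ∑ i, X i with hm
  set c : ℝ := ‖θ - m‖ with hc
  have hc0 : 0 ≤ c := norm_nonneg _
  set δ : ℝ := ε / (2 * (c + 1)) with hδdef
  have hδ : 0 < δ := div_pos hε (by linarith)
  have hδc : δ * c < ε := by
    have h2 : δ * (2 * (c + 1)) = ε := by
      rw [hδdef]; field_simp
    nlinarith
  have hθ' : θ + δ • (θ - m) ∈ convexHull ℝ (Set.range X) := by
    apply interior_subset (s := convexHull ℝ (Set.range X))
    apply hball
    rw [Metric.mem_ball, dist_eq_norm]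
    simpa [norm_smul, abs_of_pos hδ] using hδc
  rw [convexHull_range_eq_exists_affineCombination] at hθ'
  obtain ⟨s, v, hv0, hv1, hvc⟩ := hθ'
  rw [Finset.affineCombination_eq_linear_combination s X v hv1] at hvc
  set u : Fin n → ℝ := fun i => if i ∈ s then v i else 0 with hu
  have hu0 : ∀ i, 0 ≤ u i := by
    intro i; rw [hu]; dsimp only; split
    · exact hv0 _ ‹_›
    · exact le_refl 0
  have hu1 : ∑ i, u i = 1 := by
    rw [hu]; rw [Finset.sum_ite_mem, Finset.univ_inter, hv1]
  have huc : ∑ i, u i • X i = θ + δ • (θ - m) := by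
    rw [← hvc]
    simp only [hu, ite_smul, zero_smul, Finset.sum_ite_mem, Finset.univ_inter]
  have h1δ : (0:ℝ) < 1 + δ := by linarith
  refine ⟨fun i => (1 + δ)⁻¹ * u i + (δ / (1 + δ)) * (n : ℝ)⁻¹, ⟨?_, ?_, ?_⟩, ?_⟩
  · intro i
    have h1 : 0 < (δ / (1 + δ)) * (n : ℝ)⁻¹ :=
      mul_pos (div_pos hδ h1δ) (by positivity)
    have h2 : 0 ≤ (1 + δ)⁻¹ * u i := mul_nonneg (by positivity) (hu0 i)
    linarith
  · rw [Finset.sum_add_distrib, ← Finset.mul_sum, hu1, Finset.sum_const, Finset.card_univ,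
      Fintype.card_fin, nsmul_eq_mul]
    field_simp
  · have expand : ∀ i : Fin n, ((1 + δ)⁻¹ * u i + (δ / (1 + δ)) * (n : ℝ)⁻¹) • X i
        = (1 + δ)⁻¹ • (u i • X i) + (δ / (1 + δ)) • ((n:ℝ)⁻¹ • X i) := by
      intro i; rw [add_smul, mul_smul, mul_smul]
    simp_rw [expand]
    rw [Finset.sum_add_distrib, ← Finset.smul_sum, ← Finset.smul_sum, huc, ← Finset.smul_sum,
      ← hm]
    match_scalars
    field_simp
    ring
  · intro i
    have h1 : 0 < (δ / (1 + δ)) * (n : ℝ)⁻¹ :=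
      mul_pos (div_pos hδ h1δ) (by positivity)
    have h2 : 0 ≤ (1 + δ)⁻¹ * u i := mul_nonneg (by positivity) (hu0 i)
    linarith

/-- `R(θ) > 0` for `θ` in the interior of the convex hull. -/
lemma elR_pos (n d : ℕ) (hn : 0 < n) (X : Fin n → EuclideanSpace ℝ (Fin d))
    {θ : EuclideanSpace ℝ (Fin d)} (hθ : θ ∈ interior (convexHull ℝ (Set.range X))) :
    0 < elR n d X θ := by
  obtain ⟨w, hw, hwpos⟩ := exists_posWeights n d hn X hθ
  have h : 0 < ∏ i, (n : ℝ) * w i :=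
    Finset.prod_pos fun i _ => mul_pos (by exact_mod_cast hn) (hwpos i)
  exact lt_of_lt_of_le h (le_elR n d X hw)

/-- `log ∘ R` is concave on the interior of the convex hull. -/
lemma concave_logR (n d : ℕ) (hn : 0 < n) (X : Fin n → EuclideanSpace ℝ (Fin d)) :
    ConcaveOn ℝ (interior (convexHull ℝ (Set.range X)))
      (fun θ => Real.log (elR n d X θ)) := by
  have hSconv : Convex ℝ (interior (convexHull ℝ (Set.range X))) :=
    (convex_convexHull ℝ _).interior
  refine ⟨hSconv, ?_⟩
  intro x hx y hy a b ha hb hab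
  have hmid : a • x + b • y ∈ interior (convexHull ℝ (Set.range X)) := hSconv hx hy ha hb hab
  obtain ⟨wx, hwx, -⟩ := exists_posWeights n d hn X hx
  obtain ⟨wy, hwy, -⟩ := exists_posWeights n d hn X hy
  obtain ⟨w1, hw1, hw1eq, -⟩ := exists_elR_eq n d X ⟨wx, hwx⟩
  obtain ⟨w2, hw2, hw2eq, -⟩ := exists_elR_eq n d X ⟨wy, hwy⟩
  have hn' : (0:ℝ) < n := by exact_mod_cast hn
  have hRx : 0 < elR n d X x := elR_pos n d hn X hx
  have hRy : 0 < elR n d X y := elR_pos n d hn X hy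
  -- the convex combination of the two maximizers
  set w : Fin n → ℝ := fun i => a * w1 i + b * w2 i with hwdef
  have hwmem : w ∈ Wset n d X (a • x + b • y) := by
    refine ⟨fun i => add_nonneg (mul_nonneg ha (hw1.1 i)) (mul_nonneg hb (hw2.1 i)), ?_, ?_⟩
    · rw [hwdef]
      rw [Finset.sum_add_distrib, ← Finset.mul_sum, ← Finset.mul_sum, hw1.2.1, hw2.2.1]
      simpa using hab
    · have expand : ∀ i : Fin n, (a * w1 i + b * w2 i) • X i
          = a • (w1 i • X i) + b • (w2 i • X i) := by
        intro i; rw [add_smul, mul_smul, mul_smul]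
      rw [hwdef]
      simp_rw [expand]
      rw [Finset.sum_add_distrib, ← Finset.smul_sum, ← Finset.smul_sum, hw1.2.2, hw2.2.2]
  have h1nn : ∀ i ∈ Finset.univ, 0 ≤ (n : ℝ) * w1 i :=
    fun i _ => mul_nonneg hn'.le (hw1.1 i)
  have h2nn : ∀ i ∈ Finset.univ, 0 ≤ (n : ℝ) * w2 i :=
    fun i _ => mul_nonneg hn'.le (hw2.1 i)
  have key : (elR n d X x) ^ a * (elR n d X y) ^ b ≤ elR n d X (a • x + b • y) := by
    calc (elR n d X x) ^ a * (elR n d X y) ^ b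
        = (∏ i, (n : ℝ) * w1 i) ^ a * (∏ i, (n : ℝ) * w2 i) ^ b := by rw [hw1eq, hw2eq]
      _ = ∏ i, (((n : ℝ) * w1 i) ^ a * ((n : ℝ) * w2 i) ^ b) := by
          rw [← Real.finset_prod_rpow _ _ h1nn a, ← Real.finset_prod_rpow _ _ h2nn b,
            ← Finset.prod_mul_distrib]
      _ ≤ ∏ i, (n : ℝ) * w i := by
          refine Finset.prod_le_prod (fun i _ => ?_) (fun i _ => ?_)
          · exact mul_nonneg (Real.rpow_nonneg (h1nn i (Finset.mem_univ i)) a)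
              (Real.rpow_nonneg (h2nn i (Finset.mem_univ i)) b)
          · calc ((n : ℝ) * w1 i) ^ a * ((n : ℝ) * w2 i) ^ b
                ≤ a * ((n : ℝ) * w1 i) + b * ((n : ℝ) * w2 i) :=
                Real.geom_mean_le_arith_mean2_weighted ha hb
                  (h1nn i (Finset.mem_univ i)) (h2nn i (Finset.mem_univ i)) hab
              _ = (n : ℝ) * w i := by rw [hwdef]; ring
      _ ≤ elR n d X (a • x + b • y) := le_elR n d X hwmem
  have hlhs : 0 < (elR n d X x) ^ a * (elR n d X y) ^ b :=
    mul_pos (Real.rpow_pos_of_pos hRx a) (Real.rpow_pos_of_pos hRy b)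
  calc a • Real.log (elR n d X x) + b • Real.log (elR n d X y)
      = Real.log ((elR n d X x) ^ a * (elR n d X y) ^ b) := by
        rw [Real.log_mul (Real.rpow_pos_of_pos hRx a).ne' (Real.rpow_pos_of_pos hRy b).ne',
          Real.log_rpow hRx, Real.log_rpow hRy]
        simp [smul_eq_mul]
    _ ≤ Real.log (elR n d X (a • x + b • y)) := Real.log_le_log hlhs key

/-- continuity on the domain: `R` is continuous on `Θₙ`, and hence so
is `l(θ) = -2 log R(θ)`. -/
theorem stmt17 (n d : ℕ) (hn : 0 < n) (hd : 0 < d)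
    (X : Fin n → EuclideanSpace ℝ (Fin d))
    (hspan : (interior (convexHull ℝ (Set.range X))).Nonempty) :
    ContinuousOn (elR n d X) (interior (convexHull ℝ (Set.range X))) ∧
      ContinuousOn (elln n d X) (interior (convexHull ℝ (Set.range X))) := by
  have hgcont : ContinuousOn (fun θ => Real.log (elR n d X θ))
      (interior (convexHull ℝ (Set.range X))) :=
    (concave_logR n d hn X).continuousOn isOpen_interior
  have hRcont : ContinuousOn (elR n d X) (interior (convexHull ℝ (Set.range X))) := by
    have h1 : ContinuousOn (fun θ => Real.exp (Real.log (elR n d X θ)))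
        (interior (convexHull ℝ (Set.range X))) :=
      Real.continuous_exp.comp_continuousOn hgcont
    exact h1.congr fun θ hθ => (Real.exp_log (elR_pos n d hn X hθ)).symm
  refine ⟨hRcont, ?_⟩
  have : ContinuousOn (fun θ => -2 * Real.log (elR n d X θ))
      (interior (convexHull ℝ (Set.range X))) := continuousOn_const.mul hgcont
  exact this
end
end
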